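/- arXiv:2108.07608 — 3 statements merged into one kernel-verified Lean document; each statement's English description precedes it below -/
import Mathlib

section
/- Let k be a field of characteristic p > 0 and let G be a finite p-group (a finite group whose order is a power of p). Then the augmentation ideal of the group algebra k[G] (the kernel of the augmentation map k[G] → k sending each group element to 1) is a nilpotent ideal. -/
/-!
Induct on `|G|`. A nontrivial `p`-group has a central element `z ≠ 1`; let `N = ⟨z⟩`. The map
`k[G] → k[G/N]` sends the augmentation ideal `I` into that of `k[G/N]`, which is nilpotent by
induction, so some power of `I` lies in its kernel. That kernel lies in the ideal generated by
`z - 1`, which is central and nilpotent because `(z - 1) ^ p ^ t = z ^ p ^ t - 1 = 0` in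
characteristic `p`; so the kernel is nilpotent, and hence so is `I`.
-/

/-- The augmentation ideal of the group algebra `k[G]`: the kernel of the
`k`-algebra homomorphism `k[G] → k` sending every group element to `1`. -/
noncomputable def augmentationIdeal (k : Type*) [Field k] (G : Type*) [Group G] :
    Ideal (MonoidAlgebra k G) :=
  RingHom.ker (MonoidAlgebra.lift k k G (1 : G →* k))

open MonoidAlgebra

namespace Submodule

variable {R A B : Type*} [CommSemiring R] [Semiring A] [Algebra R A] [Semiring B] [Algebra R B]

theorem isNilpotent_of_le {S T : Submodule R A} (h : S ≤ T) (hT : IsNilpotent T) :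
    IsNilpotent S := by
  obtain ⟨n, hn⟩ := hT
  exact ⟨n, ((pow_le_pow_left' h n).trans hn.le).antisymm zero_le⟩

theorem isNilpotent_of_isNilpotent_map (f : A →ₐ[R] B) {S J : Submodule R A}
    (hS : IsNilpotent (S.map f.toLinearMap)) (hker : LinearMap.ker f.toLinearMap ≤ J)
    (hJ : IsNilpotent J) : IsNilpotent S := by
  obtain ⟨m, hm⟩ := hS
  have hSm : S ^ m ≤ J := fun x hx => hker <| by
    have : f x ∈ S.map f.toLinearMap ^ m := Submodule.map_pow S f m ▸ mem_map_of_mem hx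
    rwa [hm, zero_eq_bot, mem_bot] at this
  obtain ⟨e, he⟩ := isNilpotent_of_le hSm hJ
  exact ⟨m * e, by rw [pow_mul, he]⟩

theorem isNilpotent_restrictScalars_span_singleton {c : A} (hc : ∀ x, Commute c x)
    (hn : IsNilpotent c) : IsNilpotent ((Ideal.span {c}).restrictScalars R) := by
  have hpow : ∀ n : ℕ, (Ideal.span {c}).restrictScalars R ^ (n + 1) ≤
      (Ideal.span {c ^ (n + 1)}).restrictScalars R := by
    intro n
    induction n with
    | zero => simp
    | succ n ih =>
      refine (pow_succ _ _).trans_le (mul_le.2 fun x hx y hy => ?_)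
      obtain ⟨a, rfl⟩ := Ideal.mem_span_singleton'.1 (ih hx)
      obtain ⟨b, rfl⟩ := Ideal.mem_span_singleton'.1 hy
      refine Ideal.mem_span_singleton'.2 ⟨a * b, ?_⟩
      rw [pow_succ c (n + 1)]
      simp only [← mul_assoc]
      rw [mul_assoc a (c ^ (n + 1)) b, ((hc b).pow_left _).eq, ← mul_assoc]
  obtain ⟨n, hn⟩ := hn
  refine ⟨n + 1, le_bot_iff.mp ((hpow n).trans ?_)⟩
  simp [pow_succ, hn]

end Submodule

namespace Subgroup

variable {G : Type*} [Group G]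

theorem normal_of_le_center {H : Subgroup G} (h : H ≤ center G) : H.Normal :=
  ⟨fun n hn g => by rwa [mem_center_iff.1 (h hn) g, mul_inv_cancel_right]⟩

theorem card_quotient_lt [Finite G] {N : Subgroup G} (hN : N ≠ ⊥) :
    Nat.card (G ⧸ N) < Nat.card G := by
  rw [card_eq_card_quotient_mul_card_subgroup N]
  exact lt_mul_of_one_lt_right Nat.card_pos ((one_lt_card_iff_ne_bot N).2 hN)

end Subgroup

namespace MonoidAlgebra

section CommRing

variable (k : Type*) [CommRing k]

theorem mem_of_mapDomain_eq_zero {M N : Type*} [Monoid M] {f : M → N} (hf : f.Surjective)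
    {J : Submodule k k[M]} (hJ : ∀ a b, f a = f b → of k M a - of k M b ∈ J) {x : k[M]}
    (hx : mapDomain f x = 0) : x ∈ J := by
  have key : ∀ y : k[M], y - mapDomain (Function.surjInv hf ∘ f) y ∈ J := fun y => by
    induction y using MonoidAlgebra.induction_linear with
    | zero => simp
    | add y₁ y₂ h₁ h₂ => rw [mapDomain_add, add_sub_add_comm]; exact J.add_mem h₁ h₂
    | single a r =>
      rw [mapDomain_single, ← smul_of, ← smul_of, ← smul_sub]
      exact J.smul_mem r (hJ _ _ (Function.surjInv_eq hf (f a)).symm)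
  have hsf : mapDomain (Function.surjInv hf ∘ f) x = 0 := by
    rw [← mapDomain_zero (Function.surjInv hf), ← hx]
    ext
    simp [mapDomain, Finsupp.mapDomain_comp]
  simpa [hsf] using key x

variable {G : Type*} [Group G]

theorem of_sub_one_mem_of_mem_zpowers {J : Ideal k[G]} {z g : G} (hz : of k G z - 1 ∈ J)
    (hg : g ∈ Subgroup.zpowers z) : of k G g - 1 ∈ J := by
  rw [Subgroup.zpowers_eq_closure] at hg
  induction hg using Subgroup.closure_induction with
  | mem x hx => rwa [Set.mem_singleton_iff.1 hx]
  | one => rw [map_one, sub_self]; exact J.zero_mem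
  | mul x y _ _ hx hy =>
    have : of k G (x * y) - 1 = of k G x * (of k G y - 1) + (of k G x - 1) := by
      rw [map_mul]; noncomm_ring
    exact this ▸ J.add_mem (J.mul_mem_left _ hy) hx
  | inv x _ hx =>
    have : of k G x⁻¹ - 1 = -(of k G x⁻¹ * (of k G x - 1)) := by
      rw [mul_sub, ← map_mul, inv_mul_cancel, map_one]; noncomm_ring
    exact this ▸ J.neg_mem (J.mul_mem_left _ hx)

theorem ker_mapDomainAlgHom_mk'_le (N : Subgroup G) [N.Normal] {J : Ideal k[G]}
    (hJ : ∀ n ∈ N, of k G n - 1 ∈ J) :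
    LinearMap.ker (mapDomainAlgHom k k (QuotientGroup.mk' N)).toLinearMap ≤
      J.restrictScalars k := by
  refine fun x hx => mem_of_mapDomain_eq_zero k (QuotientGroup.mk'_surjective N)
    (fun a b hab => ?_) hx
  have : of k G a - of k G b = -(of k G a * (of k G (a⁻¹ * b) - 1)) := by
    rw [mul_sub, ← map_mul, mul_inv_cancel_left]; noncomm_ring
  exact this ▸ J.neg_mem (J.mul_mem_left _ (hJ _ (QuotientGroup.eq.1 hab)))

theorem isNilpotent_of_sub_one_of_pow_eq_one (p : ℕ) [Fact p.Prime] [CharP k p] {g : G} {n : ℕ}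
    (hg : g ^ p ^ n = 1) : IsNilpotent (of k G g - 1) := by
  have : CharP k[G] p :=
    charP_of_injective_algebraMap (FaithfulSMul.algebraMap_injective k k[G]) p
  refine ⟨p ^ n, ?_⟩
  rw [sub_pow_char_pow_of_commute p n (Commute.one_right _), one_pow, ← map_pow, hg, map_one,
    sub_self]

end CommRing

end MonoidAlgebra

section Augmentation

variable (k : Type*) [Field k] {G : Type*} [Group G]

theorem augmentationIdeal_eq_bot [Subsingleton G] : augmentationIdeal k G = ⊥ := by
  have : lift k k G 1 = (uniqueAlgEquiv k G).toAlgHom :=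
    algHom_ext (fun g => by simp [Subsingleton.elim g 1, uniqueAlgEquiv, uniqueRingEquiv])
      (by ext)
  exact (RingHom.injective_iff_ker_eq_bot _).1 (this ▸ (uniqueAlgEquiv k G).injective)

theorem map_augmentationIdeal_le {H : Type*} [Group H] (f : G →* H) :
    ((augmentationIdeal k G).restrictScalars k).map (mapDomainAlgHom k k f).toLinearMap ≤
      (augmentationIdeal k H).restrictScalars k := by
  rintro _ ⟨x, hx, rfl⟩
  have : (lift k k H 1).comp (mapDomainAlgHom k k f) = lift k k G 1 :=
    algHom_ext (fun g => by simp) (by ext)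
  change lift k k H 1 (mapDomainAlgHom k k f x) = 0
  rw [← AlgHom.comp_apply, this]
  exact hx

end Augmentation

/-- If `k` is a field of characteristic `p > 0` and `G` is a finite `p`-group,
then the augmentation ideal of `k[G]` is a nilpotent ideal (here viewed as a
`k`-submodule of `k[G]`, with the multiplication of submodules; since it is a
two-sided ideal, its submodule powers agree with its ideal powers). -/
theorem augmentationIdeal_isNilpotent (k : Type*) [Field k] (p : ℕ) [Fact p.Prime]
    [CharP k p] (G : Type*) [Group G] [Finite G] (hG : IsPGroup p G) :
    IsNilpotent ((augmentationIdeal k G).restrictScalars k) := by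
  revert ‹Group G›
  induction G using Finite.induction_subsingleton_or_nontrivial with
  | hbase G =>
    intro _ _
    exact ⟨1, by simp [augmentationIdeal_eq_bot]⟩
  | hstep G ih =>
    intro _ hG
    have := hG.center_nontrivial
    obtain ⟨⟨z, hz_center⟩, hz_ne⟩ := exists_ne (1 : Subgroup.center G)
    let N := Subgroup.zpowers z
    have : N.Normal := Subgroup.normal_of_le_center (Subgroup.zpowers_le.2 hz_center)
    have hN : N ≠ ⊥ := fun h => hz_ne (Subtype.ext (Subgroup.zpowers_eq_bot.1 h))
    have hz_comm : ∀ x : k[G], Commute (of k G z - 1) x := fun x =>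
      (of_commute (fun g => (Subgroup.mem_center_iff.1 hz_center g).symm) x).sub_left
        (Commute.one_left x)
    obtain ⟨t, hzt⟩ := hG z
    exact Submodule.isNilpotent_of_isNilpotent_map (mapDomainAlgHom k k (QuotientGroup.mk' N))
      (Submodule.isNilpotent_of_le (map_augmentationIdeal_le k _)
        (ih _ (Subgroup.card_quotient_lt hN) (hG.to_quotient N)))
      (ker_mapDomainAlgHom_mk'_le k N fun _ =>
        of_sub_one_mem_of_mem_zpowers k (Ideal.mem_span_singleton_self _))
      (Submodule.isNilpotent_restrictScalars_span_singleton hz_comm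
        (isNilpotent_of_sub_one_of_pow_eq_one k p hzt))
end

section
/- Let Λ be a complete noetherian local ring whose residue field has characteristic p > 0, and let G be a finite p-group. Then the group algebra Λ[G] is a local ring. -/
/-!
The augmentation `ε : Λ[G] → Λ` is a local homomorphism, which is enough because `Λ` is local.
Reduction modulo the maximal ideal `𝔪` reflects units in `Λ[G]`: if `b c ≡ 1` and `c b ≡ 1`
modulo `𝔪 Λ[G]`, then multiplication by `b c` and by `c b` is surjective on the finite
`Λ`-module `Λ[G]` by Nakayama's lemma. So it suffices that over a ring `k` of characteristic `p`
every `x ∈ ker ε` is nilpotent. Choose a central `z ∈ G` of order `p`. By induction on `|G|`, the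
image of `x` in `k[G/⟨z⟩]` is nilpotent, so some `x ^ m` lies in `k[G] (z - 1)`; since `z - 1`
is central and `(z - 1) ^ p = z ^ p - 1 = 0`, this gives `x ^ (m p) = 0`.
-/

open MonoidAlgebra

theorem LinearMap.surjective_of_sub_mem_smul_top {R M : Type*} [CommRing R] [AddCommGroup M]
    [Module R M] [Module.Finite R M] {I : Ideal R} (hI : I ≤ Ideal.jacobson ⊥) (f : M →ₗ[R] M)
    (hf : ∀ m, f m - m ∈ I • (⊤ : Submodule R M)) : Function.Surjective f := by
  refine f.surjective_of_surjective_comp_mkQ I hI ?_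
  convert (I • ⊤ : Submodule R M).mkQ_surjective using 1
  ext m
  exact (Submodule.Quotient.eq _).2 (hf m)

theorem isUnit_of_sub_one_mem_smul_top {R A : Type*} [CommRing R] [Ring A] [Algebra R A]
    [Module.Finite R A] {I : Ideal R} (hI : I ≤ Ideal.jacobson ⊥) {u : A}
    (hu : u - 1 ∈ I • (⊤ : Submodule R A)) : IsUnit u := by
  have map_mem (f : A →ₗ[R] A) : f (u - 1) ∈ I • (⊤ : Submodule R A) := by
    have := Submodule.mem_map_of_mem (f := f) hu
    rw [Submodule.map_smul''] at this
    exact Submodule.smul_mono le_rfl le_top this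
  obtain ⟨v, hv⟩ := (LinearMap.mulLeft R u).surjective_of_sub_mem_smul_top hI
    (fun a => by simpa [sub_mul] using map_mem (LinearMap.mulRight R a)) 1
  obtain ⟨w, hw⟩ := (LinearMap.mulRight R u).surjective_of_sub_mem_smul_top hI
    (fun a => by simpa [mul_sub] using map_mem (LinearMap.mulLeft R a)) 1
  exact isUnit_iff_exists_and_exists.2 ⟨⟨v, hv⟩, ⟨w, hw⟩⟩

theorem Subgroup.normal_of_le_center_s1 {G : Type*} [Group G] {H : Subgroup G}
    (hH : H ≤ Subgroup.center G) : H.Normal :=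
  ⟨fun n hn g => by rwa [(Subgroup.mem_center_iff.1 (hH hn) g), mul_inv_cancel_right]⟩

theorem IsPGroup.exists_mem_center_orderOf_eq {p : ℕ} [Fact p.Prime] {G : Type*} [Group G]
    [Finite G] [Nontrivial G] (hG : IsPGroup p G) :
    ∃ z ∈ Subgroup.center G, orderOf z = p := by
  have := hG.center_nontrivial
  obtain ⟨z, hz⟩ := exists_prime_orderOf_dvd_card' (G := Subgroup.center G) p
    (((hG.to_subgroup _).card_eq_or_dvd).resolve_left Finite.one_lt_card.ne')
  exact ⟨z, z.2, by rwa [Subgroup.orderOf_coe]⟩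

namespace MonoidAlgebra

noncomputable def augmentation (R G : Type*) [CommRing R] [Group G] :
    MonoidAlgebra R G →+* R :=
  lift R R G 1

variable {R S G H : Type*} [CommRing R] [CommRing S] [Group G] [Group H]

@[simp]
theorem augmentation_single (g : G) (r : R) : augmentation R G (single g r) = r := by
  simp [augmentation]

theorem augmentation_comp_mapDomainRingHom (φ : G →* H) :
    (augmentation R H).comp (mapDomainRingHom R φ) = augmentation R G :=
  ringHom_ext (by simp) (by simp)

theorem augmentation_comp_mapRingHom (f : R →+* S) :
    (augmentation S G).comp (mapRingHom G f) = f.comp (augmentation R G) :=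
  ringHom_ext (by simp) (by simp)

theorem algebraMap_comp_augmentation [Subsingleton G] :
    (algebraMap R (MonoidAlgebra R G)).comp (augmentation R G) = RingHom.id _ :=
  ringHom_ext (by simp) (fun g => by simp [Subsingleton.elim g 1])

theorem mem_ker_smul_top_of_mapRingHom_eq_zero {f : R →+* S} {x : MonoidAlgebra R G}
    (hx : mapRingHom G f x = 0) : x ∈ RingHom.ker f • (⊤ : Submodule R (MonoidAlgebra R G)) := by
  rw [← sum_coeff_single x]
  refine Submodule.finsuppSum_mem _ _ _ _ fun g _ => ?_
  rw [← mul_one (x.coeff g), ← smul_single']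
  refine Submodule.smul_mem_smul ?_ Submodule.mem_top
  simpa using congr(($hx).coeff g)

theorem isLocalHom_mapRingHom [Finite G] {f : R →+* S} (hf : Function.Surjective f)
    (hker : RingHom.ker f ≤ Ideal.jacobson ⊥) : IsLocalHom (mapRingHom G f) := by
  refine ⟨fun b hb => ?_⟩
  obtain ⟨c, hc⟩ : ∃ c, mapRingHom G f c = hb.unit⁻¹ := map_surjective f.toAddMonoidHom hf _
  have hunit {u : MonoidAlgebra R G} (hu : mapRingHom G f u = 1) : IsUnit u :=
    isUnit_of_sub_one_mem_smul_top hker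
      (mem_ker_smul_top_of_mapRingHom_eq_zero (by rw [map_sub, hu, map_one, sub_self]))
  obtain ⟨v, hv⟩ := (hunit (u := b * c) (by rw [map_mul, hc, hb.mul_val_inv])).exists_right_inv
  obtain ⟨w, hw⟩ := (hunit (u := c * b) (by rw [map_mul, hc, hb.val_inv_mul])).exists_left_inv
  exact isUnit_iff_exists_and_exists.2 ⟨⟨c * v, by rwa [← mul_assoc]⟩, ⟨w * c, by rwa [mul_assoc]⟩⟩

theorem ker_mapDomainRingHom_le_span_single_sub_one [Finite G] (z : G)
    [(Subgroup.zpowers z).Normal] :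
    RingHom.ker (mapDomainRingHom R (QuotientGroup.mk' (Subgroup.zpowers z))) ≤
      Ideal.span {single z (1 : R) - 1} := by
  let π := mapDomainRingHom R (QuotientGroup.mk' (Subgroup.zpowers z))
  let s := mapDomainLinearMap R R (Quotient.out : G ⧸ Subgroup.zpowers z → G)
  suffices h : ∀ x, x - s (π x) ∈ Ideal.span {single z (1 : R) - 1} by
    intro x hx
    simpa [show π x = 0 from hx] using h x
  intro x
  induction x using MonoidAlgebra.induction_linear with
  | zero => simp
  | add x y hx hy => simpa [sub_add_sub_comm] using add_mem hx hy
  | single g r =>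
    set g' := (g : G ⧸ Subgroup.zpowers z).out
    obtain ⟨n, hn⟩ : ∃ n : ℕ, z ^ n = g'⁻¹ * g :=
      mem_powers_iff_mem_zpowers.2 (QuotientGroup.eq.1 (QuotientGroup.out_eq' _))
    refine Ideal.mem_span_singleton'.2 ⟨single g' r * ∑ i ∈ Finset.range n, single z 1 ^ i, ?_⟩
    calc _ = single g' r * (single z 1 ^ n - 1) := by rw [mul_assoc, geom_sum_mul]
      _ = single g r - single g' r := by
        rw [mul_sub, mul_one, single_pow, one_pow, single_mul_single, hn, mul_inv_cancel_left,
          mul_one]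
      _ = _ := by simp [π, s, g']

theorem single_sub_one_pow_eq_zero (p : ℕ) [Fact p.Prime] [CharP R p] {z : G} (hz : z ^ p = 1) :
    (single z (1 : R) - 1) ^ p = 0 := by
  have := charP_of_injective_algebraMap' R (A := MonoidAlgebra R G) p
  rw [sub_pow_char_of_commute _ (Commute.one_right _), single_pow, hz, one_pow, one_pow,
    ← one_def, sub_self]

theorem isNilpotent_of_augmentation_eq_zero (p : ℕ) [Fact p.Prime] [CharP R p] [Finite G]
    (hG : IsPGroup p G) {x : MonoidAlgebra R G} (hx : augmentation R G x = 0) :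
    IsNilpotent x := by
  induction hcard : Nat.card G using Nat.strong_induction_on generalizing G with
  | _ n ih =>
  rcases subsingleton_or_nontrivial G with _ | _
  · rw [← RingHom.id_apply x, ← algebraMap_comp_augmentation, RingHom.comp_apply, hx, map_zero]
    exact IsNilpotent.zero
  obtain ⟨z, hz_center, hz_order⟩ := hG.exists_mem_center_orderOf_eq
  have : (Subgroup.zpowers z).Normal :=
    Subgroup.normal_of_le_center_s1 (Subgroup.zpowers_le.2 hz_center)
  let π := mapDomainRingHom R (QuotientGroup.mk' (Subgroup.zpowers z))
  have card_lt : Nat.card (G ⧸ Subgroup.zpowers z) < n := by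
    rw [← hcard, (Subgroup.zpowers z).card_eq_card_quotient_mul_card_subgroup, Nat.card_zpowers,
      hz_order]
    exact lt_mul_of_one_lt_right Nat.card_pos (Fact.out : p.Prime).one_lt
  obtain ⟨m, hm⟩ := ih _ card_lt (hG.to_quotient _) (x := π x)
    (by rwa [← RingHom.comp_apply, augmentation_comp_mapDomainRingHom]) rfl
  obtain ⟨y, hy⟩ := Ideal.mem_span_singleton'.1 <|
    ker_mapDomainRingHom_le_span_single_sub_one z (show x ^ m ∈ RingHom.ker π by
      rw [RingHom.mem_ker, map_pow, hm])
  have hz_central : Commute (single z (1 : R) - 1) y :=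
    (single_commute (fun g => (Subgroup.mem_center_iff.1 hz_center g).symm) (Commute.all 1)
      y).sub_left (Commute.one_left y)
  refine ⟨m * p, ?_⟩
  rw [pow_mul, ← hy, hz_central.symm.mul_pow,
    single_sub_one_pow_eq_zero p (hz_order ▸ pow_orderOf_eq_one z), mul_zero]

theorem isLocalHom_augmentation (p : ℕ) [Fact p.Prime] [CharP R p] [Finite G]
    (hG : IsPGroup p G) : IsLocalHom (augmentation R G) := by
  refine ⟨fun b hb => ?_⟩
  let u := algebraMap R (MonoidAlgebra R G) (augmentation R G b)
  have hnil : IsNilpotent (b - u) := isNilpotent_of_augmentation_eq_zero p hG (by simp [u])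
  simpa [u] using hnil.isUnit_add_left_of_commute (hb.map _) (Algebra.commutes _ _).symm

end MonoidAlgebra

theorem monoidAlgebra_isLocalRing_general (Λ : Type*) [CommRing Λ] [IsLocalRing Λ]
    (p : ℕ) [Fact p.Prime] [CharP (IsLocalRing.ResidueField Λ) p]
    (G : Type*) [Group G] [Finite G] (hG : IsPGroup p G) :
    IsLocalRing (MonoidAlgebra Λ G) := by
  let residue := IsLocalRing.residue Λ
  have : IsLocalHom (mapRingHom G residue) := isLocalHom_mapRingHom
    IsLocalRing.residue_surjective
    (IsLocalRing.ker_residue (R := Λ) ▸ IsLocalRing.maximalIdeal_le_jacobson _)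
  have : IsLocalHom (augmentation (IsLocalRing.ResidueField Λ) G) := isLocalHom_augmentation p hG
  have : IsLocalHom (residue.comp (augmentation Λ G)) := by
    rw [← augmentation_comp_mapRingHom]
    infer_instance
  have : IsLocalHom (augmentation Λ G) := isLocalHom_of_comp _ residue
  exact (augmentation Λ G).domain_isLocalRing

/-- If `Λ` is a complete noetherian local (commutative) ring whose residue field
has characteristic `p > 0`, and `G` is a finite `p`-group, then the group algebra
`Λ[G]` is a local ring (it has a unique maximal left ideal). -/
theorem monoidAlgebra_isLocalRing (Λ : Type*) [CommRing Λ] [IsLocalRing Λ]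
    [IsNoetherianRing Λ] [IsAdicComplete (IsLocalRing.maximalIdeal Λ) Λ]
    (p : ℕ) [Fact p.Prime] [CharP (IsLocalRing.ResidueField Λ) p]
    (G : Type*) [Group G] [Finite G] (hG : IsPGroup p G) :
    IsLocalRing (MonoidAlgebra Λ G) :=
  monoidAlgebra_isLocalRing_general Λ p G hG
end

section
/- Let k be a field and let A be a k-algebra that is smooth over k, i.e. formally smooth and of finite presentation as a k-algebra. Then there exist a subfield k₀ of k that is finitely generated as a field extension of the prime field of k, and a k₀-algebra A₀ that is smooth (formally smooth and of finite presentation) over k₀, together with an isomorphism of k-algebras A ≅ k ⊗_{k₀} A₀. -/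
universe u

open scoped TensorProduct

/-!
Mathlib's Noetherian descent for smooth algebras (`Algebra.Smooth.exists_subalgebra_fg`) already
gives a finitely generated subring `R₀ = ℤ[s]` of `k` and a smooth `R₀`-algebra `B₀` with
`A ≅ k ⊗_{R₀} B₀`. Take for `k₀` the subfield generated by `s`, which contains `R₀`: smoothness is
stable under base change, so `k₀ ⊗_{R₀} B₀` is smooth over `k₀`, and
`k ⊗_{k₀} (k₀ ⊗_{R₀} B₀) ≅ k ⊗_{R₀} B₀ ≅ A`.
-/

/-- Let `k` be a field and `A` a smooth `k`-algebra (formally smooth and of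
finite presentation).  Then there is a subfield `k₀` of `k`, finitely generated
as a field over the prime field of `k` (i.e. generated as a subfield of `k` by
finitely many elements), and a smooth `k₀`-algebra `A₀` with an isomorphism of
`k`-algebras `A ≅ k ⊗_{k₀} A₀`. -/
theorem smooth_algebra_descends (k : Type u) [Field k] (A : Type u) [CommRing A]
    [Algebra k A] [Algebra.Smooth k A] :
    ∃ (k₀ : Subfield k) (A₀ : Type u) (_ : CommRing A₀) (_ : Algebra k₀ A₀),
      (∃ s : Finset k, Subfield.closure (s : Set k) = k₀) ∧
      Algebra.Smooth k₀ A₀ ∧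
      Nonempty (A ≃ₐ[k] (k ⊗[k₀] A₀)) := by
  obtain ⟨_, B₀, _, _, ⟨s, rfl⟩, _, ⟨e⟩⟩ := Algebra.Smooth.exists_subalgebra_fg ℤ k A
  let k₀ := Subfield.closure (s : Set k)
  let _ : Algebra (Algebra.adjoin ℤ (s : Set k)) k₀ :=
    (RingHom.codRestrict (algebraMap _ k) k₀ fun x =>
      Subfield.subring_closure_le _ ((Algebra.adjoin_int _).le x.2)).toAlgebra
  have : IsScalarTower (Algebra.adjoin ℤ (s : Set k)) k₀ k := .of_algebraMap_eq' rfl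
  exact ⟨k₀, k₀ ⊗[_] B₀, inferInstance, inferInstance, ⟨s, rfl⟩, inferInstance,
    ⟨e.trans (Algebra.TensorProduct.cancelBaseChange _ _ k k B₀).symm⟩⟩
end
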